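/- (Asymptotic convergence to the unique source.) Let α > 0, β > 0. Let p : ℝ² → ℝ be continuously differentiable with 0 < p(x) ≤ 1 for all x, p(x_s) = 1 at a unique point x_s, p(x) < 1 for x ≠ x_s, ∇p(x) = 0 only at x = x_s, and p(x) → 0 as ‖x‖ → ∞. Let x : [0,∞) → ℝ² be a continuously differentiable trajectory satisfying x'(t) = g(x(t)) for all t ≥ 0, where g(x) = (β·α·(-log p(x))^{α-1}/p(x))·∇p(x) for p(x) < 1 and g(x_s) = 0. Then x(t) → x_s as t → ∞. -/

import Mathlib

/-!
Along the flow, `d/dt p(x t) = ⟪∇p, g⟫ = rate · ‖∇p‖²`, which is positive away from `x_s`, so `p` is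
a strict Lyapunov function: `p(x t)` increases and the trajectory stays in the compact superlevel
set `{p ≥ p(x 0)}`. If `p(x t)` stayed below some `m < 1`, the trajectory would be trapped in a
compact set avoiding `x_s`, on which `⟪∇p, g⟫` has a positive minimum, so `p(x t)` would grow
linearly. Hence `p(x t) → 1`, and as `x_s` is the only maximiser of `p`, compactness gives
`x t → x_s`.
-/

/-- The planar environment ℝ². -/
abbrev Env : Type := EuclideanSpace ℝ (Fin 2)

open Filter Topology Set InnerProductSpace

theorem HasGradientAt.comp_hasDerivAt {F : Type*} [NormedAddCommGroup F] [InnerProductSpace ℝ F]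
    [CompleteSpace F] {p : F → ℝ} {p' v : F} {x : ℝ → F} {t : ℝ}
    (hp : HasGradientAt p p' (x t)) (hx : HasDerivAt x v t) :
    HasDerivAt (fun s => p (x s)) (inner ℝ p' v) t :=
  hp.hasFDerivAt.comp_hasDerivAt t hx

theorem ContDiff.continuous_gradient {𝕜 F : Type*} [RCLike 𝕜] [NormedAddCommGroup F]
    [InnerProductSpace 𝕜 F] [CompleteSpace F] {f : F → 𝕜} (hf : ContDiff 𝕜 1 f) :
    Continuous (gradient f) :=
  (toDual 𝕜 F).symm.continuous.comp (hf.continuous_fderiv one_ne_zero)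

theorem isCompact_setOf_le_of_tendsto_cocompact {E : Type*} [TopologicalSpace E] {f : E → ℝ}
    {c : ℝ} (hf : Continuous f) (hlim : Tendsto f (cocompact E) (𝓝 0)) (hc : 0 < c) :
    IsCompact {y | c ≤ f y} := by
  obtain ⟨K, hK, hKf⟩ := mem_cocompact.mp (hlim.eventually_lt_const hc)
  exact hK.of_isClosed_subset (isClosed_le continuous_const hf)
    fun y (hy : c ≤ f y) => by_contra fun hyK => (hKf hyK : f y < c).not_ge hy

theorem mul_sub_le_sub_of_le_hasDerivAt_Ici {f f' : ℝ → ℝ} {a C : ℝ}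
    (hf : ∀ t, a ≤ t → HasDerivAt f (f' t) t) (hC : ∀ t, a < t → C ≤ f' t)
    {s t : ℝ} (hs : a ≤ s) (hst : s ≤ t) : C * (t - s) ≤ f t - f s := by
  refine (convex_Ici a).mul_sub_le_image_sub_of_le_deriv
    (fun t ht => (hf t ht).continuousAt.continuousWithinAt)
    (fun t ht => (hf t (interior_Ici.subset ht).le).differentiableAt.differentiableWithinAt)
    (fun t ht => ?_) s hs t (hs.trans hst) hst
  rw [(hf t (interior_Ici.subset ht).le).deriv]
  exact hC t (interior_Ici.subset ht)

theorem monotoneOn_of_hasDerivAt_nonneg_Ici {f f' : ℝ → ℝ} {a : ℝ}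
    (hf : ∀ t, a ≤ t → HasDerivAt f (f' t) t) (hf' : ∀ t, a < t → 0 ≤ f' t) :
    MonotoneOn f (Ici a) := fun s hs t _ hst => by
  simpa using mul_sub_le_sub_of_le_hasDerivAt_Ici hf hf' hs hst

section Lyapunov

variable {E : Type*} [TopologicalSpace E] {V φ : E → ℝ} {xs : E}

theorem tendsto_of_tendsto_apply_of_isCompact {ι : Type*} {l : Filter ι} {x : ι → E} {S : Set E}
    (hS : IsCompact S) (hV : ContinuousOn V S) (hVmax : ∀ y ∈ S, y ≠ xs → V y < V xs)
    (hxS : ∀ᶠ i in l, x i ∈ S) (hVx : Tendsto (fun i => V (x i)) l (𝓝 (V xs))) :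
    Tendsto x l (𝓝 xs) := by
  intro U hU
  obtain ⟨W, hWU, hWo, hxsW⟩ := mem_nhds_iff.mp hU
  rcases (S \ W).eq_empty_or_nonempty with hC | hC
  · filter_upwards [hxS] with i hi
    exact hWU (by_contra fun hiW => hC.subset ⟨hi, hiW⟩)
  obtain ⟨y, ⟨hyS, hyW⟩, hymax⟩ := (hS.diff hWo).exists_isMaxOn hC (hV.mono sdiff_subset)
  have hyxs : y ≠ xs := fun h => hyW (h ▸ hxsW)
  filter_upwards [hxS, hVx.eventually_const_lt (hVmax y hyS hyxs)] with i hiS hiV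
  exact hWU (by_contra fun hiW => (hymax ⟨hiS, hiW⟩).not_gt hiV)

variable {x : ℝ → E}

/-- On the compact set where the trajectory is trapped, `φ` has a positive minimum, so `V ∘ x`
grows at least linearly and cannot stay below `m`. -/
theorem exists_lt_apply_of_lt_apply_source (hV : Continuous V)
    (hφ : ContinuousOn φ {xs}ᶜ) (hφ_pos : ∀ y, y ≠ xs → 0 < φ y)
    (hcpt : IsCompact {y | V (x 0) ≤ V y}) (hmono : MonotoneOn (fun t => V (x t)) (Ici 0))
    (hx : ∀ t, 0 ≤ t → HasDerivAt (fun s => V (x s)) (φ (x t)) t)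
    {m : ℝ} (hm : m < V xs) : ∃ t, 0 ≤ t ∧ m < V (x t) := by
  by_contra! hxm
  set K := {y | V (x 0) ≤ V y} ∩ {y | V y ≤ m}
  have hxK : ∀ t, 0 ≤ t → x t ∈ K := fun t ht => ⟨hmono self_mem_Ici ht ht, hxm t ht⟩
  have hKxs : K ⊆ {xs}ᶜ := fun y hy (hyxs : y = xs) => (hyxs ▸ hy.2).not_gt hm
  obtain ⟨y, hyK, hymin⟩ := (hcpt.inter_right (isClosed_le hV continuous_const)).exists_isMinOn
    ⟨x 0, hxK 0 le_rfl⟩ (hφ.mono hKxs)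
  have hδ := hφ_pos y (hKxs hyK)
  set T := (m - V (x 0)) / φ y + 1
  have hT : 0 ≤ T := by have := hxm 0 le_rfl; positivity
  have hgrowth := mul_sub_le_sub_of_le_hasDerivAt_Ici hx (fun t ht => hymin (hxK t ht.le))
    le_rfl hT
  have : φ y * T = m - V (x 0) + φ y := by rw [mul_add, mul_div_cancel₀ _ hδ.ne', mul_one]
  linarith [hxm T hT]

theorem tendsto_of_strictLyapunov (hV : Continuous V) (hVmax : ∀ y, y ≠ xs → V y < V xs)
    (hφ : ContinuousOn φ {xs}ᶜ) (hφ_src : 0 ≤ φ xs) (hφ_pos : ∀ y, y ≠ xs → 0 < φ y)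
    (hcpt : IsCompact {y | V (x 0) ≤ V y})
    (hx : ∀ t, 0 ≤ t → HasDerivAt (fun s => V (x s)) (φ (x t)) t) :
    Tendsto x atTop (𝓝 xs) := by
  have hφ_nonneg : ∀ y, 0 ≤ φ y := fun y => by
    rcases eq_or_ne y xs with rfl | h
    exacts [hφ_src, (hφ_pos y h).le]
  have hVle : ∀ y, V y ≤ V xs := fun y => by
    rcases eq_or_ne y xs with rfl | h
    exacts [le_rfl, (hVmax y h).le]
  have hmono : MonotoneOn (fun t => V (x t)) (Ici 0) :=
    monotoneOn_of_hasDerivAt_nonneg_Ici hx fun t _ => hφ_nonneg (x t)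
  have hVx : Tendsto (fun t => V (x t)) atTop (𝓝 (V xs)) := by
    refine tendsto_order.2 ⟨fun m hm => ?_, fun u hu => .of_forall fun t => (hVle _).trans_lt hu⟩
    obtain ⟨t₀, ht₀, hm'⟩ := exists_lt_apply_of_lt_apply_source hV hφ hφ_pos hcpt hmono hx hm
    filter_upwards [eventually_ge_atTop t₀] with t ht
    exact hm'.trans_le (hmono ht₀ (ht₀.trans ht) ht)
  exact tendsto_of_tendsto_apply_of_isCompact hcpt hV.continuousOn
    (fun y _ => hVmax y) ((eventually_ge_atTop 0).mono fun t ht => hmono self_mem_Ici ht ht) hVx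

end Lyapunov

/-- The derivative of `log w` at `q` for Prelec's weighting function `w`. -/
noncomputable def prelecRate (α β q : ℝ) : ℝ := β * α * (-Real.log q) ^ (α - 1) / q

theorem prelecRate_pos {α β q : ℝ} (hα : 0 < α) (hβ : 0 < β) (hq₀ : 0 < q) (hq₁ : q < 1) :
    0 < prelecRate α β q := by
  have : 0 < -Real.log q := neg_pos.mpr (Real.log_neg hq₀ hq₁)
  unfold prelecRate
  positivity

theorem continuousAt_prelecRate {α β q : ℝ} (hq₀ : 0 < q) (hq₁ : q < 1) :
    ContinuousAt (prelecRate α β) q := by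
  have hlog : -Real.log q ≠ 0 := (neg_pos.mpr (Real.log_neg hq₀ hq₁)).ne'
  exact (continuousAt_const.mul
    ((Real.continuousAt_log hq₀.ne').neg.rpow_const (.inl hlog))).div continuousAt_id hq₀.ne'

theorem asymptotic_convergence_to_source_general (α β : ℝ) (hα : 0 < α) (hβ : 0 < β)
    (p : Env → ℝ) (xs : Env) (hp : ContDiff ℝ 1 p)
    (hpos : ∀ x, 0 < p x)
    (hmax : p xs = 1) (hlt : ∀ x, x ≠ xs → p x < 1)
    (hcrit : ∀ x, gradient p x = 0 → x = xs)
    (hdecay : Filter.Tendsto p (Filter.comap (fun x : Env => ‖x‖) Filter.atTop) (nhds 0))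
    (g : Env → Env)
    (hg : ∀ x, p x < 1 →
      g x = (β * α * (-Real.log (p x)) ^ (α - 1) / p x) • gradient p x)
    (hgs : g xs = 0)
    (x : ℝ → Env)
    (hx : ∀ t : ℝ, 0 ≤ t → HasDerivAt x (g (x t)) t) :
    Filter.Tendsto x Filter.atTop (nhds xs) := by
  have hg' : ∀ y, y ≠ xs → g y = prelecRate α β (p y) • gradient p y := fun y hy => hg y (hlt y hy)
  have hg_cont : ContinuousOn g {xs}ᶜ := by
    refine ContinuousOn.congr (fun y hy => ?_) fun y hy => hg' y hy
    exact ((continuousAt_prelecRate (hpos y) (hlt y hy)).comp hp.continuous.continuousAt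
      |>.smul hp.continuous_gradient.continuousAt).continuousWithinAt
  rw [comap_norm_atTop, Metric.cobounded_eq_cocompact] at hdecay
  refine tendsto_of_strictLyapunov (φ := fun y => inner ℝ (gradient p y) (g y)) hp.continuous
    (fun y hy => hmax ▸ hlt y hy) (hp.continuous_gradient.continuousOn.inner hg_cont)
    (by simp [hgs]) (fun y hy => ?_)
    (isCompact_setOf_le_of_tendsto_cocompact hp.continuous hdecay (hpos _))
    fun t ht => ((hp.differentiable one_ne_zero _).hasGradientAt).comp_hasDerivAt (hx t ht)
  rw [hg' y hy, real_inner_smul_right]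
  exact mul_pos (prelecRate_pos hα hβ (hpos y) (hlt y hy))
    (real_inner_self_pos.mpr fun h => hy (hcrit y h))

/-- Asymptotic convergence to the unique source: for α, β > 0, if p is continuously
differentiable, 0 < p ≤ 1 everywhere, p(x_s) = 1 at a unique point x_s (p < 1 elsewhere),
∇p = 0 only at x_s, and p(x) → 0 as ‖x‖ → ∞, then every trajectory of
x' = g(x), where g(x) = (β·α·(-log p(x))^(α-1)/p(x)) · ∇p(x) for p(x) < 1 and
g(x_s) = 0, converges to x_s. -/
theorem asymptotic_convergence_to_source (α β : ℝ) (hα : 0 < α) (hβ : 0 < β)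
    (p : Env → ℝ) (xs : Env) (hp : ContDiff ℝ 1 p)
    (hpos : ∀ x, 0 < p x) (hle : ∀ x, p x ≤ 1)
    (hmax : p xs = 1) (hlt : ∀ x, x ≠ xs → p x < 1)
    (hcrit : ∀ x, gradient p x = 0 → x = xs)
    (hdecay : Filter.Tendsto p (Filter.comap (fun x : Env => ‖x‖) Filter.atTop) (nhds 0))
    (g : Env → Env)
    (hg : ∀ x, p x < 1 →
      g x = (β * α * (-Real.log (p x)) ^ (α - 1) / p x) • gradient p x)
    (hgs : g xs = 0)
    (x : ℝ → Env) (hxC1 : ContDiff ℝ 1 x)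
    (hx : ∀ t : ℝ, 0 ≤ t → HasDerivAt x (g (x t)) t) :
    Filter.Tendsto x Filter.atTop (nhds xs) :=
  asymptotic_convergence_to_source_general α β hα hβ p xs hp hpos hmax hlt hcrit hdecay g hg hgs x
    hx
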